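/- arXiv:2510.19348 — 7 statements merged into one kernel-verified Lean document; each statement's English description precedes it below -/
import Mathlib

section
/- Equivalence of the global DFS branch-and-bound dynamics and the subtree decomposition: for every policy π, every stack L, incumbent x, and all n, x', the small-step DFS dynamics leads from (L, x, 0) to ([], x', n) (in the reflexive-transitive closure of Step_π) if and only if StackSolves_π L x n x'. In particular ([p], x, 0) reaches ([], x', n) if and only if Solves_π p x n x': the total number of nodes created by the DFS B&B run equals the sum, over the open nodes of the stack, of the sizes of the subtrees rooted at them, with the incumbent threaded from one subtree to the next. -/
variable {P X A : Type*}

/-- Depth-first run of branch-and-bound under policy `π`: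
`Solves f c π p x n x'` means DFS B&B started at subproblem `p` with incumbent `x`
terminates after creating exactly `n` nodes strictly below that node,
ending with incumbent `x'`. -/
inductive Solves (f : P → X → Option X) (c : P → X → A → P × P) (π : P → X → A) :
    P → X → ℕ → X → Prop
  | fathom {p : P} {x x' : X} : f p x = some x' → Solves f c π p x 0 x'
  | branch {p p₁ p₂ : P} {x x₁ x₂ : X} {n₁ n₂ : ℕ} :
      f p x = none → c p x (π p x) = (p₁, p₂) →
      Solves f c π p₁ x n₁ x₁ → Solves f c π p₂ x₁ n₂ x₂ →
      Solves f c π p x (2 + n₁ + n₂) x₂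

/-- Run of DFS B&B over a stack of open nodes, threading the incumbent. -/
inductive StackSolves (f : P → X → Option X) (c : P → X → A → P × P) (π : P → X → A) :
    List P → X → ℕ → X → Prop
  | nil {x : X} : StackSolves f c π [] x 0 x
  | cons {p : P} {L : List P} {x x' x'' : X} {n m : ℕ} :
      Solves f c π p x n x' → StackSolves f c π L x' m x'' →
      StackSolves f c π (p :: L) x (n + m) x''

/-- Small-step DFS dynamics on (stack, incumbent, node count). -/
inductive Step (f : P → X → Option X) (c : P → X → A → P × P) (π : P → X → A) :
    List P × X × ℕ → List P × X × ℕ → Prop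
  | fathom {p : P} {L : List P} {x x' : X} {n : ℕ} :
      f p x = some x' → Step f c π (p :: L, x, n) (L, x', n)
  | branch {p p₁ p₂ : P} {L : List P} {x : X} {n : ℕ} :
      f p x = none → c p x (π p x) = (p₁, p₂) →
      Step f c π (p :: L, x, n) (p₁ :: p₂ :: L, x, n + 2)

lemma solves_steps {f : P → X → Option X} {c : P → X → A → P × P} {π : P → X → A}
    {p : P} {x x' : X} {n : ℕ} (h : Solves f c π p x n x') :
    ∀ (L : List P) (k : ℕ),
      Relation.ReflTransGen (Step f c π) (p :: L, x, k) (L, x', k + n) := by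
  induction h with
  | fathom hf =>
    intro L k
    simpa using Relation.ReflTransGen.single (Step.fathom hf)
  | branch hf hc _ _ ih1 ih2 =>
    intro L k
    rw [← Nat.add_assoc, ← Nat.add_assoc]
    exact Relation.ReflTransGen.head (Step.branch hf hc)
      ((ih1 _ (k + 2)).trans (ih2 L _))

lemma stackSolves_steps {f : P → X → Option X} {c : P → X → A → P × P} {π : P → X → A}
    {L : List P} {x x' : X} {m : ℕ} (h : StackSolves f c π L x m x') :
    ∀ k : ℕ, Relation.ReflTransGen (Step f c π) (L, x, k) ([], x', k + m) := by
  induction h with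
  | nil => intro k; exact .refl
  | cons hs _ ih =>
    intro k
    rw [← Nat.add_assoc]
    exact (solves_steps hs _ k).trans (ih _)

lemma steps_stackSolves {f : P → X → Option X} {c : P → X → A → P × P} {π : P → X → A}
    {x' : X} {n : ℕ} :
    ∀ {s : List P × X × ℕ}, Relation.ReflTransGen (Step f c π) s ([], x', n) →
      ∃ m, n = s.2.2 + m ∧ StackSolves f c π s.1 s.2.1 m x' := by
  intro s h
  induction h using Relation.ReflTransGen.head_induction_on with
  | refl => exact ⟨0, by simp, StackSolves.nil⟩
  | head hstep _ ih =>
    cases hstep with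
    | fathom hf =>
      obtain ⟨m, hm, hss⟩ := ih
      exact ⟨0 + m, by simpa using hm, StackSolves.cons (Solves.fathom hf) hss⟩
    | branch hf hc =>
      obtain ⟨m, hm, hss⟩ := ih
      rcases hss with _ | ⟨hs1, hss2⟩
      rcases hss2 with _ | ⟨hs2, hss3⟩
      refine ⟨_, ?_, StackSolves.cons (Solves.branch hf hc hs1 hs2) hss3⟩
      simp only at hm ⊢
      omega

/-- Equivalence of the global DFS branch-and-bound dynamics and the subtree
decomposition: reaching `([], x', n)` from `(L, x, 0)` is equivalent to
`StackSolves`, and in particular from a single-node stack `[p]` it is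
equivalent to `Solves`. -/
theorem steps_iff_stackSolves (f : P → X → Option X) (c : P → X → A → P × P)
    (π : P → X → A) :
    (∀ (L : List P) (x : X) (n : ℕ) (x' : X),
      Relation.ReflTransGen (Step f c π) (L, x, 0) ([], x', n) ↔
        StackSolves f c π L x n x') ∧
    (∀ (p : P) (x : X) (n : ℕ) (x' : X),
      Relation.ReflTransGen (Step f c π) ([p], x, 0) ([], x', n) ↔
        Solves f c π p x n x') := by
  constructor
  · intro L x n x'
    constructor
    · intro h
      obtain ⟨m, hm, hss⟩ := steps_stackSolves h
      simp at hm; subst hm; exact hss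
    · intro h
      simpa using stackSolves_steps h 0
  · intro p x n x'
    constructor
    · intro h
      obtain ⟨m, hm, hss⟩ := steps_stackSolves h
      simp at hm; subst hm
      rcases hss with _ | ⟨hs, hss2⟩
      rcases hss2
      simpa using hs
    · intro h
      simpa using stackSolves_steps (StackSolves.cons h StackSolves.nil) 0
end

section
/- k-step Bellman equation in DFS branch-and-bound: let π be a policy and suppose the small-step DFS dynamics leads from ([p], x, 0) to (L, x', 2k) by a finite sequence of steps containing exactly k branch steps. If StackSolves_π L x' m x_f, then Solves_π p x (2k + m) x_f. In words: the size of the subtree rooted at the current node equals 2k plus the sum of the sizes of the subtrees rooted at the open nodes present after k branching transitions, with incumbents threaded in depth-first order (the open nodes reached after k branching transitions contribute V̄(o₁) = −2k + Σᵢ V̄(oᵢ^{(k)})). -/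
variable {P X A : Type*}

/-- `StepsCount f c π s s' k j`: a finite sequence of small DFS steps from `s` to `s'`
containing exactly `k` branch steps and exactly `j` fathom steps. -/
inductive StepsCount (f : P → X → Option X) (c : P → X → A → P × P) (π : P → X → A) :
    List P × X × ℕ → List P × X × ℕ → ℕ → ℕ → Prop
  | refl (s : List P × X × ℕ) : StepsCount f c π s s 0 0
  | fathom {p : P} {L : List P} {x x' : X} {n : ℕ} {s : List P × X × ℕ} {k j : ℕ} :
      f p x = some x' → StepsCount f c π (L, x', n) s k j →
      StepsCount f c π (p :: L, x, n) s k (j + 1)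
  | branch {p p₁ p₂ : P} {L : List P} {x : X} {n : ℕ} {s : List P × X × ℕ} {k j : ℕ} :
      f p x = none → c p x (π p x) = (p₁, p₂) →
      StepsCount f c π (p₁ :: p₂ :: L, x, n + 2) s k j →
      StepsCount f c π (p :: L, x, n) s (k + 1) j

theorem stackSolves_cons_inv {f : P → X → Option X} {c : P → X → A → P × P}
    {π : P → X → A} {p : P} {L : List P} {x x_f : X} {t : ℕ}
    (h : StackSolves f c π (p :: L) x t x_f) :
    ∃ n x' m, Solves f c π p x n x' ∧ StackSolves f c π L x' m x_f ∧ t = n + m := by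
  cases h with
  | cons h1 h2 => exact ⟨_, _, _, h1, h2, rfl⟩

theorem stepsCount_stackSolves (f : P → X → Option X) (c : P → X → A → P × P)
    (π : P → X → A) :
    ∀ {s s' : List P × X × ℕ} {k j : ℕ}, StepsCount f c π s s' k j →
    ∀ {m : ℕ} {x_f : X}, StackSolves f c π s'.1 s'.2.1 m x_f →
    StackSolves f c π s.1 s.2.1 (2 * k + m) x_f := by
  intro s s' k j h
  induction h with
  | refl s => intro m x_f hs; simpa using hs
  | fathom hf _ ih =>
    intro m x_f hs
    have := ih hs
    simpa using StackSolves.cons (Solves.fathom hf) this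
  | @branch p p₁ p₂ L x n s k j hf hc _ ih =>
    intro m x_f hs
    obtain ⟨n₁, x₁, m₁, h1, hrest, heq1⟩ := stackSolves_cons_inv (ih hs)
    obtain ⟨n₂, x₂, m₂, h2', hrest', heq2⟩ := stackSolves_cons_inv hrest
    have hsol := Solves.branch hf hc h1 h2'
    have := StackSolves.cons hsol hrest'
    have heq : 2 + n₁ + n₂ + m₂ = 2 * (k + 1) + m := by omega
    rwa [heq] at this

/-- k-step Bellman equation in DFS branch-and-bound: if the small-step dynamics
leads from `([p], x, 0)` to `(L, x', 2 * k)` by a run containing exactly `k`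
branch steps, and solving the resulting stack `L` from `x'` creates `m` nodes
ending in `x_f`, then the subtree rooted at `p` has size `2 * k + m`. -/
theorem k_step_bellman (f : P → X → Option X) (c : P → X → A → P × P)
    (π : P → X → A) (p : P) (x x' x_f : X) (L : List P) (k j m : ℕ)
    (h : StepsCount f c π ([p], x, 0) (L, x', 2 * k) k j)
    (hs : StackSolves f c π L x' m x_f) :
    Solves f c π p x (2 * k + m) x_f := by
  obtain ⟨n₁, x₁, m₁, h1, hrest, heq⟩ := stackSolves_cons_inv (stepsCount_stackSolves f c π h hs)
  cases hrest
  have : n₁ = 2 * k + m := by omega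
  rwa [this] at h1
end

section
/- Bellman optimality equation for optimal subtree sizes in DFS branch-and-bound: assume universal termination and incumbent invariance with σ, and let A be a nonempty finite type. Then for every (p, x): if f p x = some x' then N*(p, x) = 0; and if f p x = none then N*(p, x) = min over a ∈ A of Q̄*(p, x, a), i.e. N*(p, x) = min over a ∈ A of (2 + N*(p₁ᵃ, x) + N*(p₂ᵃ, σ p₁ᵃ x)) where (p₁ᵃ, p₂ᵃ) = c p x a. -/
variable {P X A : Type*}

/-- Optimal subtree size: the least number of nodes created below `(p, x)`
over all policies. -/
noncomputable def Nstar (f : P → X → Option X) (c : P → X → A → P × P)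
    (p : P) (x : X) : ℕ :=
  sInf { n : ℕ | ∃ (π : P → X → A) (x' : X), Solves f c π p x n x' }

/-- The greedy policy minimizing the one-step Bellman cost. -/
noncomputable def pistar [Fintype A] [Nonempty A]
    (f : P → X → Option X) (c : P → X → A → P × P) (σ : P → X → X) :
    P → X → A := fun p x =>
  (Finset.exists_mem_eq_inf' Finset.univ_nonempty
    (fun a : A => 2 + Nstar f c (c p x a).1 x + Nstar f c (c p x a).2 (σ (c p x a).1 x))).choose

lemma pistar_spec [Fintype A] [Nonempty A]
    (f : P → X → Option X) (c : P → X → A → P × P) (σ : P → X → X) (p : P) (x : X) :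
    (Finset.univ.inf' Finset.univ_nonempty fun a : A =>
        2 + Nstar f c (c p x a).1 x + Nstar f c (c p x a).2 (σ (c p x a).1 x))
      = 2 + Nstar f c (c p x (pistar f c σ p x)).1 x
          + Nstar f c (c p x (pistar f c σ p x)).2 (σ (c p x (pistar f c σ p x)).1 x) :=
  (Finset.exists_mem_eq_inf' Finset.univ_nonempty
    (fun a : A => 2 + Nstar f c (c p x a).1 x
      + Nstar f c (c p x a).2 (σ (c p x a).1 x))).choose_spec.2

/-- Lower bound: any solve at a branched node costs at least the Bellman infimum. -/
lemma solve_lower [Fintype A] [Nonempty A]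
    (f : P → X → Option X) (c : P → X → A → P × P) (σ : P → X → X)
    (hσ : ∀ (π : P → X → A) (p : P) (x : X) (n : ℕ) (x' : X),
      Solves f c π p x n x' → x' = σ p x)
    {π : P → X → A} {p : P} {x : X} {n : ℕ} {x' : X}
    (h : Solves f c π p x n x') (hn : f p x = none) :
    (Finset.univ.inf' Finset.univ_nonempty fun a : A =>
        2 + Nstar f c (c p x a).1 x + Nstar f c (c p x a).2 (σ (c p x a).1 x)) ≤ n := by
  cases h with
  | fathom h => rw [hn] at h; cases h
  | @branch _ p₁ p₂ _ x₁ x₂ n₁ n₂ hf hc h1 h2 =>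
    have hx1 : x₁ = σ p₁ x := hσ _ _ _ _ _ h1
    have hN1 : Nstar f c p₁ x ≤ n₁ := Nat.sInf_le ⟨π, _, h1⟩
    have hN2 : Nstar f c p₂ (σ p₁ x) ≤ n₂ := Nat.sInf_le ⟨π, _, hx1 ▸ h2⟩
    calc (Finset.univ.inf' Finset.univ_nonempty fun a : A =>
            2 + Nstar f c (c p x a).1 x + Nstar f c (c p x a).2 (σ (c p x a).1 x))
        ≤ 2 + Nstar f c (c p x (π p x)).1 x
            + Nstar f c (c p x (π p x)).2 (σ (c p x (π p x)).1 x) :=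
          Finset.inf'_le _ (Finset.mem_univ _)
      _ = 2 + Nstar f c p₁ x + Nstar f c p₂ (σ p₁ x) := by rw [hc]
      _ ≤ 2 + n₁ + n₂ := by omega

/-- The greedy policy achieves the optimal subtree size. -/
lemma pistar_opt [Fintype A] [Nonempty A]
    (f : P → X → Option X) (c : P → X → A → P × P) (σ : P → X → X)
    (hσ : ∀ (π : P → X → A) (p : P) (x : X) (n : ℕ) (x' : X),
      Solves f c π p x n x' → x' = σ p x)
    (hterm : ∀ (π : P → X → A) (p : P) (x : X),
      ∃ (n : ℕ) (x' : X), Solves f c π p x n x')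
    (m : ℕ) :
    ∀ (p : P) (x : X) (x' : X), Solves f c (pistar f c σ) p x m x' → m = Nstar f c p x := by
  induction m using Nat.strong_induction_on with
  | _ m ih =>
    intro p x x' h
    cases h with
    | fathom hf =>
      have h0 : (0 : ℕ) ∈ {n : ℕ | ∃ (π : P → X → A) (x'' : X), Solves f c π p x n x''} :=
        ⟨pistar f c σ, _, Solves.fathom hf⟩
      exact (Nat.le_zero.mp (Nat.sInf_le h0)).symm
    | @branch _ p₁ p₂ _ x₁ x₂ n₁ n₂ hf hc h1 h2 =>
      have hx1 : x₁ = σ p₁ x := hσ _ _ _ _ _ h1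
      have e1 : n₁ = Nstar f c p₁ x := ih n₁ (by omega) _ _ _ h1
      have e2 : n₂ = Nstar f c p₂ (σ p₁ x) := ih n₂ (by omega) _ _ _ (hx1 ▸ h2)
      have hmem : Nstar f c p x ≤ 2 + n₁ + n₂ :=
        Nat.sInf_le ⟨pistar f c σ, _, Solves.branch hf hc h1 h2⟩
      -- lower bound on Nstar: take the element achieving the infimum
      have hne : {n : ℕ | ∃ (π : P → X → A) (x' : X), Solves f c π p x n x'}.Nonempty := by
        obtain ⟨n, x', hs⟩ := hterm (pistar f c σ) p x
        exact ⟨n, pistar f c σ, x', hs⟩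
      obtain ⟨π', x'', hsol⟩ := Nat.sInf_mem hne
      have hlow := solve_lower f c σ hσ hsol hf
      have hspec := pistar_spec f c σ p x
      rw [hc] at hspec
      simp only [] at hspec
      simp only [hspec] at hlow
      unfold Nstar at hmem hlow e1 e2 ⊢
      omega


/-- Bellman optimality equation for optimal subtree sizes in DFS B&B. -/
theorem bellman_optimality [Fintype A] [Nonempty A]
    (f : P → X → Option X) (c : P → X → A → P × P) (σ : P → X → X)
    (hσ : ∀ (π : P → X → A) (p : P) (x : X) (n : ℕ) (x' : X),
      Solves f c π p x n x' → x' = σ p x)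
    (hterm : ∀ (π : P → X → A) (p : P) (x : X),
      ∃ (n : ℕ) (x' : X), Solves f c π p x n x')
    (p : P) (x : X) :
    (∀ x' : X, f p x = some x' → Nstar f c p x = 0) ∧
    (f p x = none →
      Nstar f c p x =
        Finset.univ.inf' Finset.univ_nonempty fun a : A =>
          2 + Nstar f c (c p x a).1 x + Nstar f c (c p x a).2 (σ (c p x a).1 x)) := by
  constructor
  · intro x' hf
    exact Nat.le_zero.mp (Nat.sInf_le ⟨pistar f c σ, _, Solves.fathom hf⟩)
  · intro hf
    obtain ⟨m, x', hsol⟩ := hterm (pistar f c σ) p x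
    have hm := pistar_opt f c σ hσ hterm m p x x' hsol
    cases hsol with
    | fathom h => rw [hf] at h; cases h
    | @branch _ p₁ p₂ _ x₁ x₂ n₁ n₂ hf' hc h1 h2 =>
      have hx1 : x₁ = σ p₁ x := hσ _ _ _ _ _ h1
      have e1 : n₁ = Nstar f c p₁ x := pistar_opt f c σ hσ hterm n₁ p₁ x x₁ h1
      have e2 : n₂ = Nstar f c p₂ (σ p₁ x) :=
        pistar_opt f c σ hσ hterm n₂ p₂ (σ p₁ x) x' (hx1 ▸ h2)
      have hspec := pistar_spec f c σ p x
      rw [hc] at hspec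
      simp only [] at hspec
      omega
end

section
/- Greedy policies are globally optimal in DFS branch-and-bound (Eq. 4): assume universal termination and incumbent invariance with σ, and let A be a nonempty finite type. Then every greedy policy π* satisfies Solves_{π*} p x (N*(p, x)) (σ p x) for every pair (p, x); that is, a single policy acting greedily with respect to the local subtree-value function Q̄* simultaneously attains the minimal subtree size at every node, so acting greedily with respect to Q̄* is equivalent to acting according to a globally optimal policy. -/
variable {P X A : Type*}

/-- Local subtree-value function for branching with action `a` at `(p, x)`. -/
noncomputable def Qbar (f : P → X → Option X) (c : P → X → A → P × P)
    (σ : P → X → X) (p : P) (x : X) (a : A) : ℕ :=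
  2 + Nstar f c (c p x a).1 x + Nstar f c (c p x a).2 (σ (c p x a).1 x)

/-- A policy is greedy if at every branched node it minimizes `Qbar`. -/
def Greedy (f : P → X → Option X) (c : P → X → A → P × P)
    (σ : P → X → X) (π : P → X → A) : Prop :=
  ∀ (p : P) (x : X), f p x = none →
    ∀ a : A, Qbar f c σ p x (π p x) ≤ Qbar f c σ p x a

/-- Greedy policies are globally optimal in DFS branch-and-bound: a greedy
policy attains the minimal subtree size at every node `(p, x)`. -/
theorem greedy_optimal [Fintype A] [Nonempty A]
    (f : P → X → Option X) (c : P → X → A → P × P) (σ : P → X → X)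
    (hσ : ∀ (π : P → X → A) (p : P) (x : X) (n : ℕ) (x' : X),
      Solves f c π p x n x' → x' = σ p x)
    (hterm : ∀ (π : P → X → A) (p : P) (x : X),
      ∃ (n : ℕ) (x' : X), Solves f c π p x n x')
    (πstar : P → X → A) (hgreedy : Greedy f c σ πstar) :
    ∀ (p : P) (x : X), Solves f c πstar p x (Nstar f c p x) (σ p x) := by
  have hne : ∀ p x, {n : ℕ | ∃ (π : P → X → A) (x' : X), Solves f c π p x n x'}.Nonempty := by
    intro p x
    obtain ⟨n, x', h⟩ := hterm πstar p x
    exact ⟨n, πstar, x', h⟩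
  have hmem : ∀ p x, ∃ (π : P → X → A) (x' : X), Solves f c π p x (Nstar f c p x) x' :=
    fun p x => Nat.sInf_mem (hne p x)
  have L1 : ∀ (π : P → X → A) p x n x', Solves f c π p x n x' → f p x = none →
      Qbar f c σ p x (π p x) ≤ n := by
    intro π p x n x' h hnone
    cases h with
    | fathom hf => rw [hf] at hnone; exact absurd hnone (by simp)
    | branch hf hc h1 h2 =>
      rename_i p₁ p₂ x₁ n₁ n₂
      have hx1 : x₁ = σ p₁ x := hσ π p₁ x n₁ x₁ h1
      have e1 : Nstar f c p₁ x ≤ n₁ := Nat.sInf_le ⟨π, x₁, h1⟩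
      have e2 : Nstar f c p₂ (σ p₁ x) ≤ n₂ := Nat.sInf_le ⟨π, x', hx1 ▸ h2⟩
      unfold Qbar
      rw [hc]
      dsimp only
      omega
  have main : ∀ n p x, Nstar f c p x ≤ n → Solves f c πstar p x (Nstar f c p x) (σ p x) := by
    intro n
    induction n using Nat.strong_induction_on with
    | _ n ih =>
      intro p x hle
      obtain ⟨π₀, x', h0⟩ := hmem p x
      cases hf : f p x with
      | some y =>
        have h0' : Solves f c πstar p x 0 y := Solves.fathom hf
        have hN : Nstar f c p x = 0 := Nat.le_zero.mp (Nat.sInf_le ⟨πstar, y, h0'⟩)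
        have hy : y = σ p x := hσ πstar p x 0 y h0'
        rw [hN, ← hy]; exact h0'
      | none =>
        have hq : Qbar f c σ p x (πstar p x) ≤ Nstar f c p x :=
          le_trans (hgreedy p x hf (π₀ p x)) (L1 π₀ p x _ x' h0 hf)
        set a := πstar p x with ha
        set q₁ := (c p x a).1 with hq₁
        set q₂ := (c p x a).2 with hq₂
        have hQ : 2 + Nstar f c q₁ x + Nstar f c q₂ (σ q₁ x) ≤ Nstar f c p x := hq
        have h1 : Solves f c πstar q₁ x (Nstar f c q₁ x) (σ q₁ x) :=
          ih (Nstar f c q₁ x) (by omega) q₁ x le_rfl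
        have h2 : Solves f c πstar q₂ (σ q₁ x) (Nstar f c q₂ (σ q₁ x)) (σ q₂ (σ q₁ x)) :=
          ih (Nstar f c q₂ (σ q₁ x)) (by omega) q₂ (σ q₁ x) le_rfl
        have hrun : Solves f c πstar p x
            (2 + Nstar f c q₁ x + Nstar f c q₂ (σ q₁ x)) (σ q₂ (σ q₁ x)) :=
          Solves.branch hf Prod.mk.eta.symm h1 h2
        have hge : Nstar f c p x ≤ 2 + Nstar f c q₁ x + Nstar f c q₂ (σ q₁ x) :=
          Nat.sInf_le ⟨πstar, σ q₂ (σ q₁ x), hrun⟩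
        have hEq : 2 + Nstar f c q₁ x + Nstar f c q₂ (σ q₁ x) = Nstar f c p x := by omega
        have hfin : σ q₂ (σ q₁ x) = σ p x := hσ πstar p x _ _ hrun
        rw [← hEq, ← hfin]
        exact hrun
  intro p x
  exact main (Nstar f c p x) p x le_rfl
end

section
/- DFS stack invariant: in every reachable state [q₁, …, q_m] of the DFS frontier process, for every index i < m there exists a position r such that r ++ [false] is a prefix of qᵢ (possibly equal to qᵢ) and q_{i+1} = r ++ [true]; that is, each open node on the stack is the right sibling of an ancestor-or-self of the open node just above it on the stack. -/
/-- Small-step dynamics of the DFS frontier process on binary-tree positions: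
from `q :: L` either fathom the node at position `q`, or branch it, pushing its
two children. -/
inductive FStep : List (List Bool) → List (List Bool) → Prop
  | fathom (q : List Bool) (L : List (List Bool)) : FStep (q :: L) L
  | branch (q : List Bool) (L : List (List Bool)) :
      FStep (q :: L) ((q ++ [false]) :: (q ++ [true]) :: L)

/-- A frontier state is reachable if it is obtained from the initial state
`[[]]` (only the root is open) by a finite sequence of steps. -/
def Reachable (S : List (List Bool)) : Prop :=
  Relation.ReflTransGen FStep [([] : List Bool)] S

/-! Consecutive stack entries are related by `RightSiblingOfAncestor`. Fathoming pops the top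
entry; branching `q` pushes `q ++ [false]`, `q ++ [true]`, which are related to each other, and
`q ++ [true]` extends `q`, so it inherits the relation of `q` with the entry below. -/

def RightSiblingOfAncestor (q q' : List Bool) : Prop :=
  ∃ r : List Bool, (r ++ [false]) <+: q ∧ q' = r ++ [true]

theorem rightSiblingOfAncestor_append_false_append_true (q : List Bool) :
    RightSiblingOfAncestor (q ++ [false]) (q ++ [true]) :=
  ⟨q, List.prefix_refl _, rfl⟩

theorem RightSiblingOfAncestor.of_prefix {p q q' : List Bool} (hpq : p <+: q)
    (h : RightSiblingOfAncestor p q') : RightSiblingOfAncestor q q' :=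
  let ⟨r, hr, hq'⟩ := h
  ⟨r, hr.trans hpq, hq'⟩

theorem FStep.isChain_rightSiblingOfAncestor {S T : List (List Bool)} (hST : FStep S T)
    (hS : S.IsChain RightSiblingOfAncestor) : T.IsChain RightSiblingOfAncestor := by
  cases hST with
  | fathom q L => exact hS.tail
  | branch q L =>
    refine List.IsChain.cons_cons (rightSiblingOfAncestor_append_false_append_true q) ?_
    cases L with
    | nil => exact .singleton _
    | cons q' L =>
      rw [List.isChain_cons_cons] at hS ⊢
      exact ⟨hS.1.of_prefix (List.prefix_append q [true]), hS.2⟩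

theorem Reachable.isChain_rightSiblingOfAncestor {S : List (List Bool)} (hS : Reachable S) :
    S.IsChain RightSiblingOfAncestor := by
  induction hS with
  | refl => exact .singleton _
  | tail _ hstep ih => exact hstep.isChain_rightSiblingOfAncestor ih

/-- DFS stack invariant: each open node on the stack is the right sibling of
an ancestor-or-self of the open node just above it on the stack. -/
theorem dfs_stack_invariant (S : List (List Bool)) (hS : Reachable S)
    (i : ℕ) (hi : i + 1 < S.length) :
    ∃ r : List Bool,
      (r ++ [false]) <+: S[i] ∧ S[i + 1] = r ++ [true] :=
  hS.isChain_rightSiblingOfAncestor.getElem i hi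
end

section
/- Open nodes form an antichain under DFS: in every reachable state of the DFS frontier process, no position in the stack is a prefix of another distinct position in the stack; that is, no open node is an ancestor (and in particular no descendant) of another open node. -/
/-! Pairwise prefix-incomparability of the stack is an invariant of the process. Branching `q`
replaces it by its two children, which are incomparable with each other, and each child is
incomparable with every `r` that `q` is, because any prefix of `q ++ [b]` other than itself is a
prefix of `q`. -/

section PrefixIncomparable

variable {α : Type*}

def PrefixIncomparable (p q : List α) : Prop :=
  ¬ p <+: q ∧ ¬ q <+: p

theorem PrefixIncomparable.symm {p q : List α} (h : PrefixIncomparable p q) :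
    PrefixIncomparable q p :=
  ⟨h.2, h.1⟩

instance : Std.Symm (PrefixIncomparable (α := α)) :=
  ⟨fun _ _ => PrefixIncomparable.symm⟩

theorem PrefixIncomparable.append_singleton {q r : List α} (h : PrefixIncomparable q r) (a : α) :
    PrefixIncomparable (q ++ [a]) r := by
  refine ⟨fun hqr => h.1 ((List.prefix_append q [a]).trans hqr), fun hrq => ?_⟩
  rcases List.prefix_concat_iff.mp hrq with rfl | hrq
  · exact h.1 (List.prefix_append q [a])
  · exact h.2 hrq

theorem prefixIncomparable_append_singleton {a b : α} (hab : a ≠ b) (q : List α) :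
    PrefixIncomparable (q ++ [a]) (q ++ [b]) := by
  simp [PrefixIncomparable, hab, hab.symm]

end PrefixIncomparable

theorem FStep.pairwise_prefixIncomparable {S T : List (List Bool)} (h : FStep S T)
    (hS : S.Pairwise PrefixIncomparable) : T.Pairwise PrefixIncomparable := by
  cases h with
  | fathom q L => exact (List.pairwise_cons.mp hS).2
  | branch q L =>
    obtain ⟨hq, hL⟩ := List.pairwise_cons.mp hS
    refine List.Pairwise.cons ?_ (List.Pairwise.cons (fun r hr => (hq r hr).append_singleton _) hL)
    rintro r (_ | ⟨_, hr⟩)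
    · exact prefixIncomparable_append_singleton Bool.false_ne_true q
    · exact (hq r hr).append_singleton _

theorem Reachable.pairwise_prefixIncomparable {S : List (List Bool)} (hS : Reachable S) :
    S.Pairwise PrefixIncomparable := by
  induction hS with
  | refl => exact List.pairwise_singleton _ _
  | tail _ hstep ih => exact hstep.pairwise_prefixIncomparable ih

/-- Open nodes form an antichain under DFS: in every reachable state, no
position in the stack is a prefix of another distinct position in the stack. -/
theorem dfs_antichain (S : List (List Bool)) (hS : Reachable S) :
    ∀ p ∈ S, ∀ q ∈ S, p ≠ q → ¬ p <+: q :=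
  fun _ hp _ hq hpq => (hS.pairwise_prefixIncomparable.forall hp hq hpq).1
end

section
/- Perfect frontiers of depth at least two are unreachable under DFS: for every natural number k ≥ 2, no reachable state of the DFS frontier process is a permutation of the list of all 2^k positions of length k. In particular, the configurations produced by k-fold application of the tree Bellman operator of TreeMDP, in which all 2^k depth-k descendants of a node are simultaneously open, cannot be produced by depth-first-search branch-and-bound when k ≥ 2. -/
/-- The list of all `2 ^ k` positions of length `k` in a binary tree. -/
def allPos : ℕ → List (List Bool)
  | 0 => [[]]
  | n + 1 => (allPos n).flatMap fun q => [q ++ [false], q ++ [true]]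

/-- Weight of a position. -/
def w (q : List Bool) : ℚ := (1/2) ^ q.length

/-- Total weight of a frontier. -/
def W (S : List (List Bool)) : ℚ := (S.map w).sum

lemma w_pos (q : List Bool) : 0 < w q := by
  unfold w; positivity

lemma W_cons (q : List Bool) (L : List (List Bool)) : W (q :: L) = w q + W L := by
  simp [W]

lemma w_branch (q : List Bool) : w (q ++ [false]) + w (q ++ [true]) = w q := by
  simp [w, pow_succ]; ring

/-- All elements of `allPos n` have length `n`. -/
lemma length_of_mem_allPos : ∀ n, ∀ q ∈ allPos n, q.length = n := by
  intro n
  induction n with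
  | zero => simp [allPos]
  | succ m ih =>
    intro q hq
    simp only [allPos, List.mem_flatMap] at hq
    obtain ⟨p, hp, hq⟩ := hq
    simp only [List.mem_cons, List.mem_singleton, List.not_mem_nil, or_false] at hq
    rcases hq with rfl | rfl <;> simp [ih p hp]

lemma length_allPos : ∀ n, (allPos n).length = 2 ^ n := by
  intro n
  induction n with
  | zero => simp [allPos]
  | succ m ih =>
    simp only [allPos, List.length_flatMap]
    rw [List.map_congr_left (g := fun _ => 2) (by intro x _; simp),
      List.map_const', List.sum_replicate, ih]
    simp [pow_succ]

lemma W_allPos (k : ℕ) : W (allPos k) = 1 := by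
  have h : ∀ x ∈ (allPos k).map w, x = (1/2 : ℚ) ^ k := by
    intro x hx
    simp only [List.mem_map] at hx
    obtain ⟨q, hq, rfl⟩ := hx
    simp [w, length_of_mem_allPos k q hq]
  rw [W, List.sum_eq_card_nsmul _ _ h]
  simp [length_allPos, div_pow]

/-- The invariant preserved by steps of maximal weight. -/
def DFSInv (S : List (List Bool)) : Prop := S = [[]] ∨ [true] ∈ S.tail

lemma step_lemma {S T : List (List Bool)} (h : FStep S T) :
    W T ≤ W S ∧ (W T = W S → DFSInv S → DFSInv T) := by
  cases h with
  | fathom q L =>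
    have hw := w_pos q
    have h1 : W T < W (q :: T) := by rw [W_cons]; linarith
    exact ⟨le_of_lt h1, fun heq => absurd heq (ne_of_lt h1)⟩
  | branch q L =>
    have heq : W ((q ++ [false]) :: (q ++ [true]) :: L) = W (q :: L) := by
      rw [W_cons, W_cons, W_cons, ← add_assoc, w_branch]
    refine ⟨le_of_eq heq, fun _ hinv => ?_⟩
    rcases hinv with h1 | h1
    · have hL : L = [] := by injection h1 with _ h2
      have hqe : q = [] := by injection h1
      right; simp [hL, hqe]
    · right
      simp only [List.tail_cons] at h1 ⊢
      exact List.mem_cons_of_mem _ h1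

/-- Key invariant of reachable states. -/
lemma reachable_invariant (S : List (List Bool)) (hS : Reachable S) :
    W S ≤ 1 ∧ (W S = 1 → DFSInv S) := by
  induction hS with
  | refl => constructor <;> simp [DFSInv, W, w]
  | tail _ hstep ih =>
    obtain ⟨hle, hpres⟩ := step_lemma hstep
    refine ⟨le_trans hle ih.1, fun h => ?_⟩
    have hmid : W _ = 1 := le_antisymm ih.1 (h ▸ hle)
    exact hpres (by rw [h, hmid]) (ih.2 hmid)

/-- Perfect frontiers of depth at least two are unreachable under DFS:
no reachable state is a permutation of the list of all positions of
length `k` when `k ≥ 2`. -/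
theorem perfect_frontier_unreachable (k : ℕ) (hk : 2 ≤ k)
    (S : List (List Bool)) (hS : Reachable S) :
    ¬ S.Perm (allPos k) := by
  intro hperm
  have hW : W S = 1 := by
    have := (hperm.map w).sum_eq
    rw [W, this, ← W, W_allPos]
  rcases (reachable_invariant S hS).2 hW with h | h
  · -- S = [[]], so [[]] ∈ allPos k, but its length is 0 ≠ k
    have hmem : ([] : List Bool) ∈ allPos k := hperm.mem_iff.mp (by simp [h])
    have := length_of_mem_allPos k _ hmem
    simp at this
    omega
  · have hmem : [true] ∈ allPos k := hperm.mem_iff.mp (List.mem_of_mem_tail h)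
    have := length_of_mem_allPos k _ hmem
    simp at this
    omega
end
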